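/- arXiv:2509.22619 — 2 statements merged into one kernel-verified Lean document; each statement's English description precedes it below -/
import Mathlib

section
/- Let k ≥ 2 and let w be a word of length n over the alphabet [k]. Then for every positive integer m, M_k(mn) ≤ binomial(m + n, n) · (∑_{ℓ=0}^{n} M(w | ℓ))^m, where M(w | ℓ) := max over words v of length ℓ over [k] of M(v,w). -/
/-- `numOcc v w` is the number of occurrences of `v` as a subsequence of `w`, i.e. the
number of strictly increasing maps `f : Fin |v| → Fin |w|` with `v⟨i⟩ = w⟨f i⟩`. -/
noncomputable def numOcc {α : Type*} (v w : List α) : ℕ :=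
  Nat.card {f : Fin v.length → Fin w.length //
    StrictMono f ∧ ∀ i : Fin v.length, v.get i = w.get (f i)}

/-- `maxOcc w = M(w)`, the maximum over all words `v` of `numOcc v w`. -/
noncomputable def maxOcc {α : Type*} (w : List α) : ℕ :=
  sSup {m | ∃ v : List α, numOcc v w = m}

/-- `Mmin k n = M_k(n)`, the minimum of `M(w)` over all words `w` of length `n`
over a `k`-letter alphabet. -/
noncomputable def Mmin (k n : ℕ) : ℕ :=
  sInf {m | ∃ w : List (Fin k), w.length = n ∧ maxOcc w = m}

/-- `maxOccLen w ℓ = M(w | ℓ)`, the maximum of `numOcc v w` over words `v` of length `ℓ`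
over the same alphabet as `w`. -/
noncomputable def maxOccLen {α : Type*} (w : List α) (ℓ : ℕ) : ℕ :=
  sSup {m | ∃ v : List α, v.length = ℓ ∧ numOcc v w = m}

section Aux

open Classical

variable {α : Type*}

lemma numOcc_nil (w : List α) : numOcc ([] : List α) w = 1 := by
  have : Unique {f : Fin ([] : List α).length → Fin w.length //
      StrictMono f ∧ ∀ i : Fin ([] : List α).length, ([] : List α).get i = w.get (f i)} := by
    refine ⟨⟨⟨fun i => i.elim0, fun i => i.elim0, fun i => i.elim0⟩⟩, ?_⟩
    rintro ⟨f, _, _⟩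
    apply Subtype.ext
    funext i
    exact i.elim0
  unfold numOcc; exact Nat.card_unique

lemma numOcc_cons_nil (b : α) (v : List α) : numOcc (b :: v) ([] : List α) = 0 := by
  have : IsEmpty {f : Fin (b :: v).length → Fin ([] : List α).length //
      StrictMono f ∧ ∀ i : Fin (b :: v).length, (b :: v).get i = ([] : List α).get (f i)} :=
    ⟨fun ⟨f, _, _⟩ => (f ⟨0, Nat.succ_pos _⟩).elim0⟩
  simpa [numOcc] using Nat.card_of_isEmpty

lemma numOcc_length_lt (v w : List α) (h : w.length < v.length) : numOcc v w = 0 := by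
  have : IsEmpty {f : Fin v.length → Fin w.length //
      StrictMono f ∧ ∀ i : Fin v.length, v.get i = w.get (f i)} := by
    refine ⟨fun ⟨f, hf, _⟩ => ?_⟩
    have := Fintype.card_le_of_injective f hf.injective
    simp only [Fintype.card_fin] at this
    omega
  simpa [numOcc] using Nat.card_of_isEmpty

lemma numOcc_cons_cons (a b : α) (v w : List α) :
    numOcc (b :: v) (a :: w) =
      numOcc (b :: v) w + if a = b then numOcc v w else 0 := by
  classical
  set S := {f : Fin (v.length + 1) → Fin (w.length + 1) //
      StrictMono f ∧ ∀ i : Fin (v.length + 1), (b :: v).get i = (a :: w).get (f i)} with hS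
  have hsplit : Nat.card S =
      Nat.card {x : S // x.1 0 = 0} + Nat.card {x : S // ¬ x.1 0 = 0} := by
    rw [← Nat.card_sum]
    exact Nat.card_congr (Equiv.sumCompl (fun x : S => x.1 0 = 0)).symm
  have h1 : Nat.card {x : S // ¬ x.1 0 = 0} = numOcc (b :: v) w := by
    refine Nat.card_congr ?_
    refine ⟨fun ⟨⟨f, hf, hg⟩, h0⟩ => ?_, fun ⟨g, hg1, hg2⟩ => ?_, ?_, ?_⟩
    · have h0' : ¬ f 0 = 0 := h0
      have hne : ∀ i, f i ≠ 0 := by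
        intro i
        have hle : f 0 ≤ f i := hf.monotone (Fin.zero_le i)
        intro hzero
        exact h0' (le_antisymm (hzero ▸ hle) (Fin.zero_le _))
      refine ⟨fun i => (f i).pred (hne i), fun i j hij => Fin.pred_lt_pred_iff.2 (hf hij),
        fun i => ?_⟩
      have hgi := hg i
      rw [← Fin.succ_pred (f i) (hne i)] at hgi
      rw [hgi, List.get_cons_succ']
    · refine ⟨⟨fun i => (g i).succ, fun i j hij => Fin.succ_lt_succ_iff.2 (hg1 hij),
        fun i => by rw [hg2 i, List.get_cons_succ']⟩, fun h => Fin.succ_ne_zero _ h⟩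
    · rintro ⟨⟨f, hf, hg⟩, h0⟩
      apply Subtype.ext; apply Subtype.ext; funext i
      simp [Fin.succ_pred]
    · rintro ⟨g, hg1, hg2⟩
      apply Subtype.ext; funext i
      exact Fin.pred_succ (h := Fin.succ_ne_zero _)
  have h2 : Nat.card {x : S // x.1 0 = 0} = if a = b then numOcc v w else 0 := by
    by_cases hab : a = b
    · rw [if_pos hab]
      refine Nat.card_congr ?_
      refine ⟨fun ⟨⟨f, hf, hg⟩, h0⟩ => ?_, fun ⟨g, hg1, hg2⟩ => ?_, ?_, ?_⟩
      · have h0' : f 0 = 0 := h0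
        have hne : ∀ i : Fin v.length, f i.succ ≠ 0 := by
          intro i hzero
          have h01 : f 0 < f i.succ := hf (Fin.succ_pos i)
          rw [hzero, h0'] at h01
          exact lt_irrefl _ h01
        refine ⟨fun i => (f i.succ).pred (hne i),
          fun i j hij => Fin.pred_lt_pred_iff.2 (hf (Fin.succ_lt_succ_iff.2 hij)),
          fun i => ?_⟩
        have hgi := hg i.succ
        rw [← Fin.succ_pred (f i.succ) (hne i)] at hgi
        rw [List.get_cons_succ'] at hgi
        rw [hgi, List.get_cons_succ']
      · refine ⟨⟨Fin.cases 0 (fun i => (g i).succ), ?_, ?_⟩, by simp⟩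
        · intro i j hij
          induction j using Fin.cases with
          | zero => exact absurd hij (by simp [Fin.lt_def])
          | succ j =>
            induction i using Fin.cases with
            | zero => simpa using Fin.succ_pos _
            | succ i =>
              simp only [Fin.cases_succ]
              exact Fin.succ_lt_succ_iff.2 (hg1 (Fin.succ_lt_succ_iff.1 hij))
        · intro i
          induction i using Fin.cases with
          | zero => simpa using hab.symm
          | succ i =>
            simp only [Fin.cases_succ]
            rw [List.get_cons_succ', List.get_cons_succ']
            exact hg2 i
      · rintro ⟨⟨f, hf, hg⟩, h0⟩
        apply Subtype.ext; apply Subtype.ext; funext i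
        induction i using Fin.cases with
        | zero => simpa using h0.symm
        | succ i => simp [Fin.succ_pred]
      · rintro ⟨g, hg1, hg2⟩
        apply Subtype.ext; funext i
        simp [Fin.pred_succ]
    · rw [if_neg hab]
      have : IsEmpty {x : S // x.1 0 = 0} := by
        refine ⟨fun ⟨⟨f, hf, hg⟩, h0⟩ => ?_⟩
        have h0' : f 0 = 0 := h0
        have hg0 := hg 0
        rw [h0', List.get_cons_zero, List.get_cons_zero] at hg0
        exact hab hg0.symm
      exact Nat.card_of_isEmpty
  show Nat.card S = _
  rw [hsplit, h1, h2]
  exact Nat.add_comm _ _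

/-- recursive count of occurrences -/
noncomputable def cnt : List α → List α → ℕ
  | [], _ => 1
  | _ :: _, [] => 0
  | b :: v, a :: w => cnt (b :: v) w + if a = b then cnt v w else 0

lemma numOcc_eq_cnt (v w : List α) : numOcc v w = cnt v w := by
  induction w generalizing v with
  | nil => cases v with
    | nil => rw [numOcc_nil]; rfl
    | cons b v => rw [numOcc_cons_nil]; rfl
  | cons a w ih => cases v with
    | nil => rw [numOcc_nil]; rfl
    | cons b v =>
      rw [numOcc_cons_cons, ih, ih]
      show _ = cnt (b :: v) (a :: w)
      rw [cnt]

lemma cnt_nil (w : List α) : cnt ([] : List α) w = 1 := by cases w <;> rfl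

lemma cnt_nil_right (b : α) (v : List α) : cnt (b :: v) ([] : List α) = 0 := rfl

lemma cnt_append (v w1 w2 : List α) :
    cnt v (w1 ++ w2) =
      ∑ j ∈ Finset.range (v.length + 1), cnt (v.take j) w1 * cnt (v.drop j) w2 := by
  induction w1 generalizing v with
  | nil =>
    cases v with
    | nil => simp [cnt_nil]
    | cons b v' =>
      rw [Finset.sum_eq_single 0]
      · simp [cnt_nil]
      · intro j _ hj
        obtain ⟨j', rfl⟩ := Nat.exists_eq_succ_of_ne_zero hj
        simp [cnt_nil_right]
      · intro h; exact absurd (Finset.mem_range.2 (Nat.succ_pos _)) h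
  | cons a w1' ih =>
    cases v with
    | nil => simp [cnt_nil]
    | cons b v' =>
      have lhs : cnt (b :: v') ((a :: w1') ++ w2) =
          cnt (b :: v') (w1' ++ w2) + if a = b then cnt v' (w1' ++ w2) else 0 := by
        rw [List.cons_append, cnt]
      rw [lhs, ih, ih]
      rw [Finset.sum_range_succ' (fun j => cnt ((b :: v').take j) (a :: w1') *
            cnt ((b :: v').drop j) w2),
          Finset.sum_range_succ' (fun j => cnt ((b :: v').take j) w1' *
            cnt ((b :: v').drop j) w2)]
      simp only [List.take_succ_cons, List.drop_succ_cons, List.take_zero, List.drop_zero,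
        cnt_nil, one_mul]
      have hterm : ∀ j, cnt (b :: v'.take j) (a :: w1') =
          cnt (b :: v'.take j) w1' + if a = b then cnt (v'.take j) w1' else 0 := fun j => rfl
      simp only [List.length_cons]
      by_cases hab : a = b
      · simp only [hterm, if_pos hab, add_mul, Finset.sum_add_distrib]
        ring
      · simp only [hterm, if_neg hab, add_zero]

lemma numOcc_append (v w1 w2 : List α) :
    numOcc v (w1 ++ w2) =
      ∑ j ∈ Finset.range (v.length + 1), numOcc (v.take j) w1 * numOcc (v.drop j) w2 := by
  simp only [numOcc_eq_cnt]
  exact cnt_append v w1 w2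

lemma numOcc_le (v w : List α) : numOcc v w ≤ w.length ^ w.length + 1 := by
  rcases le_or_gt v.length w.length with h | h
  · have h1 : numOcc v w ≤ Nat.card (Fin v.length → Fin w.length) :=
      Nat.card_le_card_of_injective Subtype.val Subtype.val_injective
    have h2 : Nat.card (Fin v.length → Fin w.length) = w.length ^ v.length := by
      simp [Nat.card_eq_fintype_card]
    rw [h2] at h1
    rcases Nat.eq_zero_or_pos w.length with h0 | h0
    · have hv : v.length = 0 := by omega
      simp only [h0, hv, pow_zero] at h1 ⊢
      omega
    · calc numOcc v w ≤ w.length ^ v.length := h1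
        _ ≤ w.length ^ w.length := Nat.pow_le_pow_right h0 h
        _ ≤ _ := Nat.le_succ _
  · rw [numOcc_length_lt v w h]; exact Nat.zero_le _

lemma bddAbove_occ (w : List α) :
    BddAbove {m | ∃ v : List α, numOcc v w = m} :=
  ⟨w.length ^ w.length + 1, fun m ⟨v, hv⟩ => hv ▸ numOcc_le v w⟩

lemma bddAbove_occLen (w : List α) (ℓ : ℕ) :
    BddAbove {m | ∃ v : List α, v.length = ℓ ∧ numOcc v w = m} :=
  ⟨w.length ^ w.length + 1, fun m ⟨v, _, hv⟩ => hv ▸ numOcc_le v w⟩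

lemma numOcc_le_maxOccLen (v w : List α) : numOcc v w ≤ maxOccLen w v.length :=
  le_csSup (bddAbove_occLen w v.length) ⟨v, rfl, rfl⟩

end Aux

/-- If `w` is a word of length `n` over a `k`-letter alphabet (`k ≥ 2`) and `m ≥ 1`,
then `M_k(mn) ≤ C(m + n, n) · (∑_{ℓ=0}^n M(w|ℓ))^m`. -/
theorem stmt4 (k n m : ℕ) (hk : 2 ≤ k) (hm : 0 < m)
    (w : List (Fin k)) (hw : w.length = n) :
    Mmin k (m * n) ≤ (m + n).choose n * (∑ ℓ ∈ Finset.range (n + 1), maxOccLen w ℓ) ^ m := by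
  classical
  set S := ∑ ℓ ∈ Finset.range (n + 1), maxOccLen w ℓ with hSdef
  -- the inner sum bound
  have hsum : ∀ v : List (Fin k),
      ∑ j ∈ Finset.range (v.length + 1), numOcc (v.take j) w ≤ S := by
    intro v
    have h1 : ∑ j ∈ Finset.range (v.length + 1), numOcc (v.take j) w =
        ∑ j ∈ (Finset.range (v.length + 1)).filter (· ≤ n), numOcc (v.take j) w := by
      refine (Finset.sum_filter_of_ne ?_).symm
      intro j hj hne
      by_contra hjn
      push_neg at hjn
      have hjl : j ≤ v.length := Nat.lt_succ_iff.1 (Finset.mem_range.1 hj)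
      have hlen : (v.take j).length = j := by
        rw [List.length_take]; omega
      exact hne (numOcc_length_lt _ _ (by rw [hlen, hw]; omega))
    rw [h1]
    have h2 : ∑ j ∈ (Finset.range (v.length + 1)).filter (· ≤ n), numOcc (v.take j) w ≤
        ∑ j ∈ (Finset.range (v.length + 1)).filter (· ≤ n), maxOccLen w (min j v.length) := by
      refine Finset.sum_le_sum fun j hj => ?_
      have := numOcc_le_maxOccLen (v.take j) w
      rwa [List.length_take] at this
    refine h2.trans ?_
    rw [hSdef]
    have h3 : ∀ j ∈ (Finset.range (v.length + 1)).filter (· ≤ n),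
        maxOccLen w (min j v.length) = maxOccLen w j := by
      intro j hj
      simp only [Finset.mem_filter, Finset.mem_range] at hj
      congr 1
      omega
    rw [Finset.sum_congr rfl h3]
    refine Finset.sum_le_sum_of_subset ?_
    intro j hj
    simp only [Finset.mem_filter, Finset.mem_range] at hj ⊢
    omega
  -- the word w repeated m times
  have key : ∀ M : ℕ, ∀ v : List (Fin k),
      numOcc v (List.replicate M w).flatten ≤ S ^ M := by
    intro M
    induction M with
    | zero =>
      intro v
      cases v with
      | nil => simp [numOcc_nil]
      | cons b v' => simp [numOcc_cons_nil]
    | succ M ih =>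
      intro v
      have hflat : (List.replicate (M + 1) w).flatten = w ++ (List.replicate M w).flatten := by
        rw [List.replicate_succ, List.flatten_cons]
      rw [hflat, numOcc_append]
      calc ∑ j ∈ Finset.range (v.length + 1),
              numOcc (v.take j) w * numOcc (v.drop j) (List.replicate M w).flatten
          ≤ ∑ j ∈ Finset.range (v.length + 1), numOcc (v.take j) w * S ^ M := by
            refine Finset.sum_le_sum fun j _ => Nat.mul_le_mul_left _ (ih _)
        _ = (∑ j ∈ Finset.range (v.length + 1), numOcc (v.take j) w) * S ^ M := by
            rw [Finset.sum_mul]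
        _ ≤ S * S ^ M := Nat.mul_le_mul_right _ (hsum v)
        _ = S ^ (M + 1) := (pow_succ' S M).symm
  set W := (List.replicate m w).flatten with hWdef
  have hWlen : W.length = m * n := by
    rw [hWdef, List.length_flatten]
    simp [hw, Finset.sum_const, mul_comm]
  have hmax : maxOcc W ≤ S ^ m := by
    refine csSup_le ⟨1, [], numOcc_nil W⟩ ?_
    rintro b ⟨v, rfl⟩
    exact key m v
  have hMmin : Mmin k (m * n) ≤ maxOcc W :=
    Nat.sInf_le ⟨W, hWlen, rfl⟩
  have hchoose : 1 ≤ (m + n).choose n := Nat.choose_pos (by omega)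
  calc Mmin k (m * n) ≤ maxOcc W := hMmin
    _ ≤ S ^ m := hmax
    _ = 1 * S ^ m := (one_mul _).symm
    _ ≤ (m + n).choose n * S ^ m := Nat.mul_le_mul_right _ hchoose
end

section
/- Fix an integer t ≥ 1. For every integer i ≥ 1, LCS(π_i, π_{i+1}) ≤ t². -/
/-- Lexicographic "strictly smaller" for vectors in `Fin r → ℤ`. -/
def lexLt {r : ℕ} (x y : Fin r → ℤ) : Prop :=
  ∃ j : Fin r, (∀ i : Fin r, i < j → x i = y i) ∧ x j < y j

/-- The `u`-twisted order on the alphabet `[t]^r`: `a` weakly precedes `b` in `π(u)`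
iff `a = b` or `(u₁a₁, …, u_r a_r)` is lexicographically smaller than
`(u₁b₁, …, u_r b_r)` (letters of `[t] = {1,…,t}` are represented by `Fin t`,
with `a i : Fin t` standing for the letter `(a i : ℤ) + 1`). -/
def uLe {t r : ℕ} (u : Fin r → ℤ) (a b : Fin r → Fin t) : Prop :=
  a = b ∨ lexLt (fun i => u i * ((a i : ℤ) + 1)) (fun i => u i * ((b i : ℤ) + 1))

instance {t r : ℕ} (u : Fin r → ℤ) : DecidableRel (uLe (t := t) (r := r) u) := fun a b => by
  unfold uLe lexLt; infer_instance

/-- `piWord t r u = π(u)`: the word listing every element of the alphabet `[t]^r`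
exactly once, in increasing `u`-twisted lexicographic order. -/
noncomputable def piWord (t r : ℕ) (u : Fin r → ℤ) : List (Fin r → Fin t) :=
  (Finset.univ.toList (α := Fin r → Fin t)).mergeSort (fun a b => decide (uLe u a b))

/-- `LCS ws` is the length of a longest word that is a subsequence of every word in `ws`. -/
noncomputable def LCS {α : Type*} (ws : List (List α)) : ℕ :=
  sSup {L | ∃ x : List α, (∀ w ∈ ws, x.Sublist w) ∧ x.length = L}

/-- The eight sign vectors `u^{(1)}, …, u^{(8)}` (rows), with `+` as `1` and `-` as `-1`. -/
def uMat : Fin 8 → Fin 8 → ℤ :=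
  ![![1, 1, 1, 1, 1, 1, 1, 1],
    ![-1, -1, -1, 1, -1, 1, -1, -1],
    ![1, 1, 1, -1, -1, -1, -1, 1],
    ![-1, 1, -1, -1, 1, 1, 1, -1],
    ![1, -1, -1, 1, -1, -1, 1, 1],
    ![-1, 1, 1, 1, 1, -1, -1, -1],
    ![1, -1, -1, -1, 1, 1, -1, 1],
    ![-1, -1, 1, -1, -1, -1, 1, -1]]

/-- `uSeq i = u^{(i)}` for `i ≥ 1`: the periodic extension `u^{(i)} = u^{(i mod 8)}`,
with the representative of `i mod 8` taken in `{1,…,8}`. -/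
def uSeq (i : ℕ) : Fin 8 → ℤ := uMat ⟨(i - 1) % 8, Nat.mod_lt _ (by norm_num)⟩

/-- `piSeq t i = π_i = π(u^{(i)})`, a permutation of the alphabet `[t]^8`. -/
noncomputable def piSeq (t : ℕ) (i : ℕ) : List (Fin 8 → Fin t) := piWord t 8 (uSeq i)

lemma uLe_trans' {t r : ℕ} {u : Fin r → ℤ} {a b c : Fin r → Fin t}
    (h1 : uLe u a b) (h2 : uLe u b c) : uLe u a c := by
  rcases h1 with rfl | ⟨j1, hlt1, hx1⟩
  · exact h2
  rcases h2 with rfl | ⟨j2, hlt2, hx2⟩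
  · exact Or.inr ⟨j1, hlt1, hx1⟩
  refine Or.inr ⟨min j1 j2, fun i hi => ?_, ?_⟩
  · rw [lt_min_iff] at hi
    rw [hlt1 i hi.1, hlt2 i hi.2]
  · rcases lt_trichotomy j1 j2 with h | h | h
    · rw [min_eq_left h.le, ← hlt2 j1 h]; exact hx1
    · subst h; rw [min_self]; exact hx1.trans hx2
    · rw [min_eq_right h.le, hlt1 j2 h]; exact hx2

lemma uLe_total' {t r : ℕ} {u : Fin r → ℤ} (hu : ∀ j, u j ≠ 0) (a b : Fin r → Fin t) :
    uLe u a b ∨ uLe u b a := by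
  by_cases hab : a = b
  · exact Or.inl (Or.inl hab)
  have hne : (Finset.univ.filter (fun j => a j ≠ b j)).Nonempty := by
    rw [Finset.filter_nonempty_iff]
    by_contra h
    push_neg at h
    exact hab (funext fun j => by simpa using h j (Finset.mem_univ j))
  set s := Finset.univ.filter (fun j : Fin r => a j ≠ b j) with hs
  set j := s.min' hne with hj
  have hjs : j ∈ s := s.min'_mem hne
  have hjab : a j ≠ b j := by simpa [hs] using hjs
  have hlt : ∀ i : Fin r, i < j → a i = b i := by
    intro i hi
    by_contra h
    exact absurd (s.min'_le i (by simpa [hs] using h)) (not_le.mpr hi)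
  have hmul : ∀ i : Fin r, a i = b i → u i * ((a i : ℤ) + 1) = u i * ((b i : ℤ) + 1) := by
    intro i h; rw [h]
  have hnej : u j * ((a j : ℤ) + 1) ≠ u j * ((b j : ℤ) + 1) := by
    intro h
    have := add_right_cancel (mul_left_cancel₀ (hu j) h)
    exact hjab (Fin.ext (by exact_mod_cast this))
  rcases lt_or_gt_of_ne hnej with h | h
  · exact Or.inl (Or.inr ⟨j, fun i hi => hmul i (hlt i hi), h⟩)
  · exact Or.inr (Or.inr ⟨j, fun i hi => (hmul i (hlt i hi)).symm, h⟩)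

lemma uLe_key {t r : ℕ} {u v : Fin r → ℤ}
    (hu : ∀ j, u j = 1 ∨ u j = -1) (hv : ∀ j, v j = 1 ∨ v j = -1)
    {a b : Fin r → Fin t} (h1 : uLe u a b) (h2 : uLe v a b)
    (h : ∀ j, u j = v j → a j = b j) : a = b := by
  have hu0 : ∀ j, u j ≠ 0 := fun j => by rcases hu j with h' | h' <;> simp [h']
  have hv0 : ∀ j, v j ≠ 0 := fun j => by rcases hv j with h' | h' <;> simp [h']
  rcases h1 with rfl | ⟨j, hjlt, hjx⟩
  · rfl
  rcases h2 with h' | ⟨j', hjlt', hjx'⟩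
  · exact h'
  exfalso
  dsimp only at hjlt hjx hjlt' hjx'
  have habj : a j ≠ b j := fun he => absurd hjx (by rw [he]; exact lt_irrefl _)
  have habj' : a j' ≠ b j' := fun he => absurd hjx' (by rw [he]; exact lt_irrefl _)
  have hltj : ∀ i : Fin r, i < j → a i = b i := by
    intro i hi
    have := add_right_cancel (mul_left_cancel₀ (hu0 i) (hjlt i hi))
    exact Fin.ext (by exact_mod_cast this)
  have hltj' : ∀ i : Fin r, i < j' → a i = b i := by
    intro i hi
    have := add_right_cancel (mul_left_cancel₀ (hv0 i) (hjlt' i hi))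
    exact Fin.ext (by exact_mod_cast this)
  have hjj : j = j' := by
    rcases lt_trichotomy j j' with h' | h' | h'
    · exact absurd (hltj' j h') habj
    · exact h'
    · exact absurd (hltj j' h') habj'
  subst hjj
  rcases hu j with h1' | h1' <;> rcases hv j with h2' | h2'
  · exact habj (h j (h1'.trans h2'.symm))
  · rw [h1'] at hjx; rw [h2'] at hjx'; linarith
  · rw [h1'] at hjx; rw [h2'] at hjx'; linarith
  · exact habj (h j (h1'.trans h2'.symm))

lemma uMat_pm : ∀ k j : Fin 8, uMat k j = 1 ∨ uMat k j = -1 := by decide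

lemma uMat_card : ∀ k : Fin 8, Fintype.card {j : Fin 8 // uMat k j = uMat (k + 1) j} = 2 := by
  decide

lemma piWord_pairwise {t r : ℕ} {u : Fin r → ℤ} (hu : ∀ j, u j ≠ 0) :
    (piWord t r u).Pairwise (uLe u) := by
  have := List.pairwise_mergeSort
    (le := fun a b : Fin r → Fin t => decide (uLe u a b))
    (fun a b c hab hbc => decide_eq_true (uLe_trans' (of_decide_eq_true hab) (of_decide_eq_true hbc)))
    (fun a b => by
      simp only [Bool.or_eq_true, decide_eq_true_eq]
      exact uLe_total' hu a b)
    (Finset.univ.toList (α := Fin r → Fin t))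
  exact this.imp (fun h => of_decide_eq_true h)

lemma piWord_nodup {t r : ℕ} (u : Fin r → ℤ) : (piWord t r u).Nodup :=
  ((List.mergeSort_perm _ _).nodup_iff).mpr (Finset.nodup_toList _)

/-- For `t ≥ 1` and every `i ≥ 1`, `LCS(π_i, π_{i+1}) ≤ t²`. -/
theorem stmt13 (t : ℕ) (ht : 1 ≤ t) (i : ℕ) (hi : 1 ≤ i) :
    LCS [piSeq t i, piSeq t (i + 1)] ≤ t ^ 2 := by
  refine csSup_le' ?_
  rintro L ⟨x, hx, rfl⟩
  set k : Fin 8 := ⟨(i - 1) % 8, Nat.mod_lt _ (by norm_num)⟩ with hk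
  have hu : uSeq i = uMat k := rfl
  have hv : uSeq (i + 1) = uMat (k + 1) := by
    unfold uSeq
    have h8 : (⟨(i + 1 - 1) % 8, Nat.mod_lt _ (by norm_num)⟩ : Fin 8) = k + 1 := by
      refine Fin.ext ?_
      show (i + 1 - 1) % 8 = ((i - 1) % 8 + 1 % 8) % 8
      omega
    rw [h8]
  have hu1 : ∀ j, uSeq i j = 1 ∨ uSeq i j = -1 := by rw [hu]; exact uMat_pm k
  have hv1 : ∀ j, uSeq (i+1) j = 1 ∨ uSeq (i+1) j = -1 := by rw [hv]; exact uMat_pm (k+1)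
  have hu0 : ∀ j, uSeq i j ≠ 0 := fun j => by rcases hu1 j with h | h <;> simp [h]
  have hv0 : ∀ j, uSeq (i+1) j ≠ 0 := fun j => by rcases hv1 j with h | h <;> simp [h]
  have hxu : x.Sublist (piSeq t i) := hx _ (by simp)
  have hxv : x.Sublist (piSeq t (i + 1)) := hx _ (by simp)
  have p1 : x.Pairwise (uLe (uSeq i)) := (piWord_pairwise hu0).sublist hxu
  have p2 : x.Pairwise (uLe (uSeq (i+1))) := (piWord_pairwise hv0).sublist hxv
  have pnd : x.Pairwise (· ≠ ·) := (piWord_nodup (uSeq i)).sublist hxu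
  set f : (Fin 8 → Fin t) → ({j : Fin 8 // uSeq i j = uSeq (i+1) j} → Fin t) :=
    fun a j => a j.1 with hf
  have P : x.Pairwise (fun a b => f a ≠ f b) := by
    refine ((pnd.and p1).and p2).imp ?_
    rintro a b ⟨⟨hne, h1⟩, h2⟩ heq
    exact hne (uLe_key hu1 hv1 h1 h2 (fun j hj => congrFun heq ⟨j, hj⟩))
  have nd : (x.map f).Nodup := List.pairwise_map.mpr P
  have hcard : Fintype.card {j : Fin 8 // uSeq i j = uSeq (i+1) j} = 2 := by
    rw [hu, hv]; exact uMat_card k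
  calc x.length = (x.map f).length := (List.length_map _).symm
    _ ≤ Fintype.card ({j : Fin 8 // uSeq i j = uSeq (i+1) j} → Fin t) := nd.length_le_card
    _ = t ^ 2 := by rw [Fintype.card_fun, Fintype.card_fin, hcard]
end
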